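/- Small witness property: let L be an LTS, ψ a conjunction-free formula in canonical form, and k ≥ |S| + 1. Then there exists an initialized run ρ of L with (ρ,k) ⊭ F_p^∞ ψ if and only if there exists a realisable ψ-avoiding sequence in L. -/

import Mathlib

open scoped Classical
open MeasureTheory

/-- A labelled transition system: a finite set of states `S`, an initial state,
a transition relation in which every state has at least one successor, and a
labeling of states by sets of atomic propositions. -/
structure LTS (S AP : Type) where
  init : S
  T : S → S → Prop
  lbl : S → Set AP
  succ_nonempty : ∀ s : S, ∃ t : S, T s t

variable {S AP : Type}

/-- A run of an LTS: an infinite sequence of states following the transitions. -/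
def IsRun (L : LTS S AP) (ρ : ℕ → S) : Prop := ∀ i : ℕ, L.T (ρ i) (ρ (i + 1))

/-- The shifted run `ρ[i..]`. -/
def shift (ρ : ℕ → S) (i : ℕ) : ℕ → S := fun n => ρ (n + i)

/-- A state formula: a (possibly empty, i.e. `false`) disjunction of literals,
each literal being a polarity (`true` = positive) paired with an atomic proposition. -/
abbrev StateFormula (AP : Type) := List (Bool × AP)

/-- A state `s` satisfies a state formula `θ`. -/
def SatState (L : LTS S AP) (θ : StateFormula AP) (s : S) : Prop :=
  ∃ p ∈ θ, if p.1 then p.2 ∈ L.lbl s else p.2 ∉ L.lbl s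

/-- A conjunction-free formula in canonical form `ψ = θ ∨ ⋁ F_p^∞ ψᵢ`, identified
with its tree `T(ψ)`: a root labeled by the state formula `θ` whose children are
the trees of the `ψᵢ`. -/
inductive CTree (AP : Type) : Type where
  | node : StateFormula AP → List (CTree AP) → CTree AP

/-- Satisfaction `(ρ, k) ⊨ ψ` for a canonical conjunction-free formula
`ψ = θ ∨ ⋁ F_p^∞ ψᵢ`. -/
def SatC (L : LTS S AP) : CTree AP → (ℕ → S) → ℕ → Prop
  | .node θ cs, ρ, k =>
      SatState L θ (ρ 0) ∨
      ∃ c ∈ cs.attach, ∀ i : ℕ, ∃ j ≤ k, SatC L c.1 (shift ρ (i + j)) k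
termination_by t => sizeOf t
decreasing_by
  have := List.sizeOf_lt_of_mem c.2
  simp only [CTree.node.sizeOf_spec]
  omega

/-- Satisfaction `(ρ, k) ⊨ F_p^∞ ψ` for a canonical conjunction-free formula `ψ`. -/
def SatFinfC (L : LTS S AP) (t : CTree AP) (ρ : ℕ → S) (k : ℕ) : Prop :=
  ∀ i : ℕ, ∃ j ≤ k, SatC L t (shift ρ (i + j)) k

/-- `Interleave l₁ l₂ l`: `l` is an interleaving (shuffle) of `l₁` and `l₂`. -/
inductive Interleave {α : Type} : List α → List α → List α → Prop where
  | nil : Interleave [] [] []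
  | left {a : α} {l₁ l₂ l : List α} : Interleave l₁ l₂ l → Interleave (a :: l₁) l₂ (a :: l)
  | right {a : α} {l₁ l₂ l : List α} : Interleave l₁ l₂ l → Interleave l₁ (a :: l₂) (a :: l)

mutual
/-- `LinExt t l`: the list `l` of state-formula labels enumerates the nodes of the
tree `t` in a linear order extending the ancestor order of the tree (the root comes
first, followed by an interleaving of linear extensions of the children's subtrees). -/
inductive LinExt {AP : Type} : CTree AP → List (StateFormula AP) → Prop where
  | node {θ : StateFormula AP} {cs : List (CTree AP)} {l : List (StateFormula AP)} :
      LinExtF cs l → LinExt (.node θ cs) (θ :: l)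

/-- Linear extensions of a forest: interleavings of linear extensions of its trees. -/
inductive LinExtF {AP : Type} : List (CTree AP) → List (StateFormula AP) → Prop where
  | nil : LinExtF [] []
  | cons {t : CTree AP} {ts : List (CTree AP)} {l₁ l₂ l : List (StateFormula AP)} :
      LinExt t l₁ → LinExtF ts l₂ → Interleave l₁ l₂ l → LinExtF (t :: ts) l
end

/-- A (nonempty) finite path of the LTS. -/
def IsPath (L : LTS S AP) (u : List S) : Prop := u ≠ [] ∧ u.Chain' L.T

/-- A loop: a finite path with at least one transition whose first and last states coincide. -/
def IsLoop (L : LTS S AP) (u : List S) : Prop :=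
  2 ≤ u.length ∧ u.Chain' L.T ∧ u.head? = u.getLast?

/-- The set `occ u` of states occurring in a finite sequence. -/
def occ (u : List S) : Set S := {s | s ∈ u}

/-- A `ψ`-avoiding sequence: a linear ordering of the nodes of `T(ψ)` extending the
ancestor order together with, for each node labeled by a state formula `θ`, a loop
whose set of states is a `θ`-avoiding cycle. -/
structure AvoidingSeq (L : LTS S AP) (ψ : CTree AP) where
  labels : List (StateFormula AP)
  loops : List (List S)
  linext : LinExt ψ labels
  length_eq : loops.length = labels.length
  isLoop : ∀ u ∈ loops, IsLoop L u
  avoid : ∀ p ∈ loops.zip labels, ∀ s ∈ p.1, ¬ SatState L p.2 s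

/-- `(vs, tail)` is a realisation witness for the loops `u₀, …, u_l` of an avoiding
sequence: finite paths `v₀, …, v_l` and an infinite run `v_{l+1} = tail`, where `v₀`
starts at the initial state, `vᵢ` starts in `occ u_{i-1}` for `1 ≤ i ≤ l+1`, and
`vᵢ` ends in `occ uᵢ` for `0 ≤ i ≤ l`. -/
def IsRealWitness (L : LTS S AP) (loops vs : List (List S)) (tail : ℕ → S) : Prop :=
  vs.length = loops.length ∧
  (∀ v ∈ vs, IsPath L v) ∧
  IsRun L tail ∧
  (∀ h : 0 < vs.length, (vs.get ⟨0, h⟩).head? = some L.init) ∧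
  (∀ (i : ℕ) (h : i + 1 < vs.length) (h' : i < loops.length) (s : S),
      (vs.get ⟨i + 1, h⟩).head? = some s → s ∈ occ (loops.get ⟨i, h'⟩)) ∧
  (∀ (i : ℕ) (h : i < vs.length) (h' : i < loops.length) (s : S),
      (vs.get ⟨i, h⟩).getLast? = some s → s ∈ occ (loops.get ⟨i, h'⟩)) ∧
  (∀ h : 0 < loops.length,
      tail 0 ∈ occ (loops.get ⟨loops.length - 1, Nat.sub_lt h Nat.one_pos⟩))

/-- An avoiding sequence is realisable in `L` if it admits a realisation witness. -/
def Realisable {ψ : CTree AP} (L : LTS S AP) (U : AvoidingSeq L ψ) : Prop :=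
  ∃ (vs : List (List S)) (tail : ℕ → S), IsRealWitness L U.loops vs tail

/-!
If `F_p^∞ ψ` fails on `ρ`, then `ψ` fails at every position of some window `[m, m + k]`: the root
label fails throughout that window, and each child `ψᵢ` fails throughout some later window,
recursively. As `k ≥ |S|`, every such window repeats a state and so contains a loop avoiding the
node's label. Loops of descendants start no earlier than the end of their ancestor's window, so
ordering the loops by their start times extends the ancestor order, and the segments of `ρ`
between consecutive loops realise the resulting avoiding sequence.

Conversely, a realisation is turned into a run that goes around each loop `uᵢ` for more than `k`
steps before following `vᵢ₊₁`. This places, for each node, a window of length `k + 1` inside its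
loop, consecutive windows at least `k` apart; by induction on the tree every node then fails
throughout its window, so `F_p^∞ ψ` fails.
-/

namespace Interleave

variable {α β : Type}

lemma map (f : α → β) {l₁ l₂ l : List α} (h : Interleave l₁ l₂ l) :
    Interleave (l₁.map f) (l₂.map f) (l.map f) := by
  induction h with
  | nil => exact .nil
  | left _ ih => exact .left ih
  | right _ ih => exact .right ih

lemma left_nil : ∀ l : List α, Interleave l [] l
  | [] => .nil
  | _ :: l => .left (left_nil l)

lemma right_nil : ∀ l : List α, Interleave [] l l
  | [] => .nil
  | _ :: l => .right (right_nil l)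

lemma exists_sublists_of_map (f : β → α) {l₁ l₂ l : List α} (h : Interleave l₁ l₂ l) :
    ∀ W : List β, W.map f = l →
      ∃ W₁ W₂ : List β, W₁.map f = l₁ ∧ W₂.map f = l₂ ∧ W₁.Sublist W ∧ W₂.Sublist W := by
  induction h with
  | nil =>
    rintro W hW
    obtain rfl := List.map_eq_nil_iff.1 hW
    exact ⟨[], [], rfl, rfl, .slnil, .slnil⟩
  | left _ ih =>
    rintro (_ | ⟨w, W⟩) hW
    · simp at hW
    simp only [List.map_cons, List.cons.injEq] at hW
    obtain ⟨rfl, hW⟩ := hW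
    obtain ⟨W₁, W₂, rfl, rfl, h₁, h₂⟩ := ih W hW
    exact ⟨w :: W₁, W₂, rfl, rfl, h₁.cons_cons w, h₂.cons w⟩
  | right _ ih =>
    rintro (_ | ⟨w, W⟩) hW
    · simp at hW
    simp only [List.map_cons, List.cons.injEq] at hW
    obtain ⟨rfl, hW⟩ := hW
    obtain ⟨W₁, W₂, rfl, rfl, h₁, h₂⟩ := ih W hW
    exact ⟨W₁, w :: W₂, rfl, rfl, h₁.cons w, h₂.cons_cons w⟩

end Interleave

lemma interleave_merge {α : Type} (le : α → α → Bool) :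
    ∀ l₁ l₂ : List α, Interleave l₁ l₂ (l₁.merge l₂ le)
  | [], l₂ => by simpa using Interleave.right_nil l₂
  | l₁, [] => by simpa using Interleave.left_nil l₁
  | a :: l₁, b :: l₂ => by
    rw [List.cons_merge_cons]
    split
    · exact .left (interleave_merge le l₁ (b :: l₂))
    · exact .right (interleave_merge le (a :: l₁) l₂)

lemma LinExt.ne_nil {t : CTree AP} {l : List (StateFormula AP)} (h : LinExt t l) : l ≠ [] := by
  cases h; simp

@[simp] lemma mem_occ {u : List S} {s : S} : s ∈ occ u ↔ s ∈ u := Iff.rfl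

lemma shift_shift (ρ : ℕ → S) (a b : ℕ) : shift (shift ρ a) b = shift ρ (b + a) := by
  funext n; simp only [shift, Nat.add_assoc]

lemma isRun_shift {L : LTS S AP} {ρ : ℕ → S} (hρ : IsRun L ρ) (i : ℕ) : IsRun L (shift ρ i) :=
  fun n => by simpa only [shift, Nat.add_right_comm] using hρ (n + i)

def seg (ρ : ℕ → S) (p n : ℕ) : List S := (List.range n).map fun r => ρ (p + r)

section Segments

variable {L : LTS S AP} {ρ : ℕ → S}

@[simp] lemma length_seg (ρ : ℕ → S) (p n : ℕ) : (seg ρ p n).length = n := by simp [seg]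

@[simp] lemma getElem_seg (ρ : ℕ → S) (p n r : ℕ) (h : r < (seg ρ p n).length) :
    (seg ρ p n)[r] = ρ (p + r) := by simp [seg]

lemma mem_seg {p n : ℕ} {s : S} : s ∈ seg ρ p n ↔ ∃ r < n, ρ (p + r) = s := by
  simp [seg]

lemma head?_seg (ρ : ℕ → S) (p : ℕ) {n : ℕ} (hn : n ≠ 0) : (seg ρ p n).head? = some (ρ p) := by
  rw [List.head?_eq_getElem?, List.getElem?_eq_getElem (by simp; omega), getElem_seg,
    Nat.add_zero]

lemma getLast?_seg (ρ : ℕ → S) (p : ℕ) {n : ℕ} (hn : n ≠ 0) :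
    (seg ρ p n).getLast? = some (ρ (p + (n - 1))) := by
  rw [List.getLast?_eq_getElem?, List.getElem?_eq_getElem (by simp; omega), getElem_seg,
    length_seg]

lemma seg_succ (ρ : ℕ → S) (p n : ℕ) : seg ρ p (n + 1) = seg ρ p n ++ [ρ (p + n)] := by
  simp [seg, List.range_succ]

lemma seg_succ' (ρ : ℕ → S) (p n : ℕ) : seg ρ p (n + 1) = ρ p :: seg ρ (p + 1) n := by
  simp [seg, List.range_succ_eq_map, Function.comp_def, Nat.add_assoc, Nat.add_comm 1]

lemma IsRun.isChain_seg (hρ : IsRun L ρ) (p n : ℕ) : (seg ρ p n).IsChain L.T := by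
  rw [seg, List.isChain_map]
  cases n with
  | zero => simp
  | succ n => exact (List.isChain_range_succ _ n).2 fun m _ => hρ (p + m)

lemma IsRun.isPath_seg (hρ : IsRun L ρ) (p : ℕ) {n : ℕ} (hn : n ≠ 0) : IsPath L (seg ρ p n) :=
  ⟨by simpa [← List.length_eq_zero_iff] using hn, hρ.isChain_seg p n⟩

lemma IsRun.isLoop_seg (hρ : IsRun L ρ) {p q : ℕ} (hpq : p < q) (h : ρ p = ρ q) :
    IsLoop L (seg ρ p (q - p + 1)) := by
  refine ⟨by simp; omega, hρ.isChain_seg _ _, ?_⟩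
  rw [head?_seg _ _ (by omega), getLast?_seg _ _ (by omega), h]
  congr 2
  omega

end Segments

lemma exists_repeat_in_window [Fintype S] {k : ℕ} (hk : Fintype.card S ≤ k) (ρ : ℕ → S) (m : ℕ) :
    ∃ p q, m ≤ p ∧ p < q ∧ q ≤ m + k ∧ ρ p = ρ q := by
  have hcard : (Finset.univ : Finset S).card < (Finset.Icc m (m + k)).card := by
    simp only [Finset.card_univ, Nat.card_Icc]; omega
  obtain ⟨a, ha, b, hb, hab, heq⟩ :=
    Finset.exists_ne_map_eq_of_card_lt_of_maps_to hcard (f := ρ) (fun _ _ => Finset.mem_univ _)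
  simp only [Finset.mem_Icc] at ha hb
  rcases Nat.lt_or_gt_of_ne hab with h | h
  · exact ⟨a, b, ha.1, h, hb.2, heq⟩
  · exact ⟨b, a, hb.1, h, ha.2, heq.symm⟩

lemma IsRun.exists_isLoop_of_card_le [Fintype S] {L : LTS S AP} {ρ : ℕ → S} {k : ℕ}
    (hρ : IsRun L ρ) (hk : Fintype.card S ≤ k) (m : ℕ) :
    ∃ u p, IsLoop L u ∧ m ≤ p ∧ p ≤ m + k ∧ ρ p ∈ u ∧ ∀ s ∈ u, ∃ j ≤ k, ρ (m + j) = s := by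
  obtain ⟨p, q, hmp, hpq, hqk, heq⟩ := exists_repeat_in_window hk ρ m
  refine ⟨seg ρ p (q - p + 1), p, hρ.isLoop_seg hpq heq, hmp, by omega,
    mem_seg.2 ⟨0, by omega, rfl⟩, fun s hs => ?_⟩
  obtain ⟨r, hr, rfl⟩ := mem_seg.1 hs
  exact ⟨p - m + r, by omega, by congr 1; omega⟩

section Violation

variable {L : LTS S AP} {ρ : ℕ → S} {k : ℕ}

mutual

theorem not_satC_of_windows : ∀ (t : CTree AP) (W : List (StateFormula AP × ℕ)),
    LinExt t (W.map Prod.fst) → W.Pairwise (fun x y => x.2 + k ≤ y.2) →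
    (∀ x ∈ W, ∀ j ≤ k, ¬ SatState L x.1 (ρ (x.2 + j))) →
    ∀ x ∈ W.head?, ∀ j ≤ k, ¬ SatC L t (shift ρ (x.2 + j)) k
  | .node _ _, [] => by simp
  | .node θ cs, x :: W => by
    rintro hlin hW hav x' hx' j hj hsat
    obtain rfl : x = x' := Option.some.inj hx'
    obtain ⟨rfl, hlin'⟩ : x.1 = θ ∧ LinExtF cs (W.map Prod.fst) := by
      cases hlin; exact ⟨rfl, by assumption⟩
    rw [SatC] at hsat
    rcases hsat with hθ | ⟨c, hc, hsatc⟩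
    · exact hav x (by simp) j hj (by simpa [shift] using hθ)
    · obtain ⟨y, hy, hfail⟩ := exists_window_not_satC cs W hlin' hW.of_cons
        (fun y hy => hav y (List.mem_cons_of_mem _ hy)) c.1 c.2
      have hxy : x.2 + k ≤ y.2 := List.rel_of_pairwise_cons hW hy
      -- `c` holds somewhere in every window of length `k + 1`, in particular in that of `y`
      obtain ⟨j', hj', hc'⟩ := hsatc (y.2 - (x.2 + j))
      rw [shift_shift, show y.2 - (x.2 + j) + j' + (x.2 + j) = y.2 + j' by omega] at hc'
      exact hfail j' hj' hc'

theorem exists_window_not_satC : ∀ (cs : List (CTree AP)) (W : List (StateFormula AP × ℕ)),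
    LinExtF cs (W.map Prod.fst) → W.Pairwise (fun x y => x.2 + k ≤ y.2) →
    (∀ x ∈ W, ∀ j ≤ k, ¬ SatState L x.1 (ρ (x.2 + j))) →
    ∀ c ∈ cs, ∃ x ∈ W, ∀ j ≤ k, ¬ SatC L c (shift ρ (x.2 + j)) k
  | [], _ => by simp
  | t :: ts, W => by
    intro hlin hW hav
    rcases hlin with _ | ⟨hlin₁, hlin₂, hint⟩
    obtain ⟨W₁, W₂, rfl, rfl, hsub₁, hsub₂⟩ := hint.exists_sublists_of_map Prod.fst W rfl
    obtain ⟨x, W₁', rfl⟩ : ∃ x W₁', W₁ = x :: W₁' :=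
      List.exists_cons_of_ne_nil (by rintro rfl; exact hlin₁.ne_nil rfl)
    have ht := not_satC_of_windows t _ hlin₁ (hW.sublist hsub₁)
      (fun y hy => hav y (hsub₁.subset hy)) x rfl
    have hts := exists_window_not_satC ts W₂ hlin₂ (hW.sublist hsub₂)
      (fun y hy => hav y (hsub₂.subset hy))
    rintro c (_ | ⟨_, hc⟩)
    · exact ⟨x, hsub₁.subset List.mem_cons_self, ht⟩
    · obtain ⟨y, hy, hfail⟩ := hts c hc
      exact ⟨y, hsub₂.subset hy, hfail⟩

end

end Violation

structure LabelledLoop (S AP : Type) where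
  label : StateFormula AP
  loop : List S
  time : ℕ

def LabelledLoop.IsAvoidingVisited (L : LTS S AP) (ρ : ℕ → S) (x : LabelledLoop S AP) : Prop :=
  IsLoop L x.loop ∧ (∀ s ∈ x.loop, ¬ SatState L x.label s) ∧ ρ x.time ∈ x.loop

section Extraction

variable [Fintype S] {L : LTS S AP} {ρ : ℕ → S} {k : ℕ}

mutual

theorem exists_loops_of_not_satC (hρ : IsRun L ρ) (hk : Fintype.card S ≤ k) :
    ∀ (t : CTree AP) (m : ℕ), (∀ j ≤ k, ¬ SatC L t (shift ρ (m + j)) k) →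
    ∃ D : List (LabelledLoop S AP), LinExt t (D.map (·.label)) ∧
      D.Pairwise (fun x y => x.time ≤ y.time) ∧ ∀ x ∈ D, m ≤ x.time ∧ x.IsAvoidingVisited L ρ
  | .node θ cs, m => by
    intro h
    have hθ : ∀ j ≤ k, ¬ SatState L θ (ρ (m + j)) := fun j hj hs =>
      h j hj (by rw [SatC]; exact Or.inl (by simpa [shift] using hs))
    have hcs : ∀ c ∈ cs, ¬ SatFinfC L c (shift ρ (m + k)) k := fun c hc hs =>
      h k le_rfl (by rw [SatC]; exact Or.inr ⟨⟨c, hc⟩, List.mem_attach _ _, hs⟩)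
    obtain ⟨u, p, hu, hmp, hpk, hpu, hsu⟩ := hρ.exists_isLoop_of_card_le hk m
    obtain ⟨D, hlin, hsorted, hD⟩ := exists_loops_of_not_satFinfC hρ hk cs (m + k) hcs
    refine ⟨⟨θ, u, p⟩ :: D, .node hlin,
      .cons (fun y hy => le_trans hpk (hD y hy).1) hsorted, ?_⟩
    rintro x (_ | ⟨_, hx⟩)
    · refine ⟨hmp, hu, fun s hs => ?_, hpu⟩
      obtain ⟨j, hj, rfl⟩ := hsu s hs
      exact hθ j hj
    · exact ⟨by have := (hD x hx).1; omega, (hD x hx).2⟩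

theorem exists_loops_of_not_satFinfC (hρ : IsRun L ρ) (hk : Fintype.card S ≤ k) :
    ∀ (cs : List (CTree AP)) (m : ℕ), (∀ c ∈ cs, ¬ SatFinfC L c (shift ρ m) k) →
    ∃ D : List (LabelledLoop S AP), LinExtF cs (D.map (·.label)) ∧
      D.Pairwise (fun x y => x.time ≤ y.time) ∧ ∀ x ∈ D, m ≤ x.time ∧ x.IsAvoidingVisited L ρ
  | [], _ => fun _ => ⟨[], .nil, .nil, by simp⟩
  | c :: cs, m => by
    intro h
    obtain ⟨i, hi⟩ : ∃ i, ∀ j ≤ k, ¬ SatC L c (shift ρ (m + i + j)) k := by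
      have := h c List.mem_cons_self
      simp only [SatFinfC, shift_shift, not_forall, not_exists, not_and] at this
      obtain ⟨i, hi⟩ := this
      exact ⟨i, fun j hj => by rw [show m + i + j = i + j + m by omega]; exact hi j hj⟩
    obtain ⟨D₁, hlin₁, hsorted₁, hD₁⟩ := exists_loops_of_not_satC hρ hk c (m + i) hi
    obtain ⟨D₂, hlin₂, hsorted₂, hD₂⟩ :=
      exists_loops_of_not_satFinfC hρ hk cs m fun c' hc' => h c' (List.mem_cons_of_mem _ hc')
    let le : LabelledLoop S AP → LabelledLoop S AP → Bool := fun x y => x.time ≤ y.time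
    refine ⟨D₁.merge D₂ le, .cons hlin₁ hlin₂ ((interleave_merge le D₁ D₂).map _), ?_, ?_⟩
    · simpa [le] using List.pairwise_merge (le := le) (by simp [le]; omega) (by simp [le]; omega)
        D₁ D₂ (by simpa [le] using hsorted₁) (by simpa [le] using hsorted₂)
    · intro x hx
      rcases List.mem_merge.1 hx with hx | hx
      · exact ⟨by have := (hD₁ x hx).1; omega, (hD₁ x hx).2⟩
      · exact hD₂ x hx

end

end Extraction

-- `vᵢ` is the segment of `ρ` from the visit `ss[i]` of `loops[i-1]` (`ss[0] = 0`) to the visit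
-- `ts[i]` of `loops[i]`.
lemma IsRun.exists_isRealWitness {L : LTS S AP} {ρ : ℕ → S} (hρ : IsRun L ρ)
    (h0 : ρ 0 = L.init) {loops : List (List S)} {ts : List ℕ} (hlen : ts.length = loops.length)
    (hsorted : ts.Pairwise (· ≤ ·)) (hvisit : ∀ i (hi : i < ts.length), ρ ts[i] ∈ loops[i]) :
    ∃ vs tail, IsRealWitness L loops vs tail := by
  obtain ⟨ss, hsslen, hss0, hss_succ⟩ : ∃ ss : List ℕ, ∃ h : ss.length = ts.length + 1,
      ss[0] = 0 ∧ ∀ i (hi : i < ts.length), ss[i + 1] = ts[i] :=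
    ⟨0 :: ts, rfl, rfl, fun _ _ => rfl⟩
  have hss_le : ∀ i (hi : i < ts.length), ss[i] ≤ ts[i]
    | 0, _ => by rw [hss0]; exact Nat.zero_le _
    | i + 1, hi => by
      rw [hss_succ i (by omega)]
      exact List.pairwise_iff_getElem.1 hsorted i (i + 1) (by omega) hi (by omega)
  set vs := List.zipWith (fun a b => seg ρ a (b - a + 1)) ss ts with hvs
  have hvslen : vs.length = ts.length := by simp [hvs, hsslen]
  have hvs_get : ∀ i (hi : i < ts.length), vs[i] = seg ρ ss[i] (ts[i] - ss[i] + 1) :=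
    fun i hi => List.getElem_zipWith
  refine ⟨vs, shift ρ ss[ts.length], by omega, ?_, isRun_shift hρ _, ?_, ?_, ?_, ?_⟩
  · intro v hv
    obtain ⟨i, hi, rfl⟩ := List.mem_iff_getElem.1 hv
    rw [hvs_get i (by omega)]
    exact hρ.isPath_seg _ (by omega)
  · intro h
    rw [List.get_eq_getElem, hvs_get 0 (by omega), head?_seg _ _ (by omega), hss0, h0]
  · intro i h _ s hs
    rw [List.get_eq_getElem, hvs_get (i + 1) (by omega), head?_seg _ _ (by omega),
      hss_succ i (by omega)] at hs
    cases hs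
    exact hvisit i (by omega)
  · intro i h _ s hs
    have := hss_le i (by omega)
    rw [List.get_eq_getElem, hvs_get i (by omega), getLast?_seg _ _ (by omega),
      show ss[i] + (ts[i] - ss[i] + 1 - 1) = ts[i] by omega] at hs
    cases hs
    exact hvisit i (by omega)
  · intro h
    have hlast : ss[ts.length] = ts[ts.length - 1] := by
      rw [← hss_succ (ts.length - 1) (by omega)]
      congr 1
      omega
    simp only [List.get_eq_getElem, shift, Nat.zero_add, hlast]
    change _ ∈ loops[loops.length - 1]
    convert hvisit (ts.length - 1) (by omega) using 2
    simp only [hlen]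

theorem exists_realisable_of_not_satFinfC [Fintype S] {L : LTS S AP} {ψ : CTree AP} {k : ℕ}
    (hk : Fintype.card S ≤ k) {ρ : ℕ → S} (hρ : IsRun L ρ) (h0 : ρ 0 = L.init)
    (h : ¬ SatFinfC L ψ ρ k) : ∃ U : AvoidingSeq L ψ, Realisable L U := by
  obtain ⟨m, hm⟩ : ∃ m, ∀ j ≤ k, ¬ SatC L ψ (shift ρ (m + j)) k := by
    simpa [SatFinfC] using h
  obtain ⟨D, hlin, hsorted, hD⟩ := exists_loops_of_not_satC hρ hk ψ m hm
  refine ⟨⟨D.map (·.label), D.map (·.loop), hlin, by simp, ?_, ?_⟩,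
    hρ.exists_isRealWitness h0 (ts := D.map (·.time)) (by simp) (List.pairwise_map.2 hsorted) ?_⟩
  · intro u hu
    obtain ⟨x, hx, rfl⟩ := List.mem_map.1 hu
    exact (hD x hx).2.1
  · intro p hp s hs
    rw [List.zip_map'] at hp
    obtain ⟨x, hx, rfl⟩ := List.mem_map.1 hp
    exact (hD x hx).2.2.1 s hs
  · intro i hi
    simpa using (hD _ (List.getElem_mem (by simpa using hi))).2.2.2

section Runs

variable {L : LTS S AP}

lemma IsLoop.exists_periodic_run {u : List S} (hu : IsLoop L u) :
    ∃ c : ℕ → S, IsRun L c ∧ Function.Periodic c (u.length - 1) ∧ (∀ i, c i ∈ u) ∧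
      ∀ s ∈ u, ∃ a, c a = s := by
  obtain ⟨hlen, hchain, hends⟩ := hu
  have hpos : 0 < u.length - 1 := by omega
  have hfirst : u[0] = u[u.length - 1] := by
    rw [List.head?_eq_getElem?, List.getLast?_eq_getElem?, List.getElem?_eq_getElem (by omega),
      List.getElem?_eq_getElem (by omega)] at hends
    exact Option.some.inj hends
  let c : ℕ → S := fun i => u[i % (u.length - 1)]'(by have := Nat.mod_lt i hpos; omega)
  have hper : Function.Periodic c (u.length - 1) := fun i => by simp [c]
  have hwrap : ∀ j (hj : j < u.length), c j = u[j] := fun j hj => by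
    rcases Nat.lt_or_ge j (u.length - 1) with h | h
    · simp [c, Nat.mod_eq_of_lt h]
    · obtain rfl : j = u.length - 1 := by omega
      simpa [c] using hfirst
  refine ⟨c, fun i => ?_, hper, fun i => List.getElem_mem _, fun s hs => ?_⟩
  · have hi := Nat.mod_lt i hpos
    rw [← hper.map_mod_nat i, ← hper.map_mod_nat (i + 1), ← Nat.mod_add_mod,
      hper.map_mod_nat (i % _ + 1), hwrap _ (by omega), hwrap _ (by omega)]
    exact List.isChain_iff_getElem.1 hchain _ (by omega)
  · obtain ⟨j, hj, rfl⟩ := List.mem_iff_getElem.1 hs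
    exact ⟨j, hwrap j hj⟩

lemma IsLoop.exists_walk {u : List S} (hu : IsLoop L u) {s t : S} (hs : s ∈ u) (ht : t ∈ u)
    (n : ℕ) : ∃ w : List S, n ≤ w.length ∧ (∀ x ∈ w, x ∈ u) ∧ (s :: (w ++ [t])).IsChain L.T := by
  obtain ⟨c, hc, hper, hcu, hsurj⟩ := hu.exists_periodic_run
  obtain ⟨a, rfl⟩ := hsurj s hs
  obtain ⟨b, rfl⟩ := hsurj t ht
  have hpos : 0 < u.length - 1 := by have := hu.1; omega
  -- going around the loop `a + n + 1` extra times
  set M := b + (u.length - 1) * (a + n + 1)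
  have hM : a + n + 1 ≤ M := by have := Nat.le_mul_of_pos_left (a + n + 1) hpos; omega
  have hcM : c M = c b := by
    rw [← hper.map_mod_nat M, Nat.add_mul_mod_self_left, hper.map_mod_nat]
  refine ⟨seg c (a + 1) (M - a - 1), by simp; omega, fun x hx => ?_, ?_⟩
  · obtain ⟨r, -, rfl⟩ := mem_seg.1 hx
    exact hcu _
  · have := hc.isChain_seg a (M - a + 1)
    rwa [show M - a + 1 = M - a - 1 + 1 + 1 by omega, seg_succ, seg_succ',
      show a + (M - a - 1 + 1) = M by omega, hcM] at this

def prepend (u : List S) (ρ : ℕ → S) (n : ℕ) : S :=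
  if h : n < u.length then u[n] else ρ (n - u.length)

lemma prepend_of_lt {u : List S} (ρ : ℕ → S) {n : ℕ} (h : n < u.length) : prepend u ρ n = u[n] :=
  dif_pos h

lemma prepend_length_add (u : List S) (ρ : ℕ → S) (n : ℕ) :
    prepend u ρ (u.length + n) = ρ n := by
  simp [prepend]

lemma isRun_prepend {u : List S} {ρ : ℕ → S} (hρ : IsRun L ρ) (hu : (u ++ [ρ 0]).IsChain L.T) :
    IsRun L (prepend u ρ) := by
  have happ : ∀ n (hn : n ≤ u.length),
      prepend u ρ n = (u ++ [ρ 0])[n]'(by simp; omega) := fun n hn => by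
    rcases Nat.lt_or_ge n u.length with h | h
    · rw [prepend_of_lt ρ h, List.getElem_append_left h]
    · obtain rfl : n = u.length := by omega
      simpa using prepend_length_add u ρ 0
  intro n
  rcases Nat.lt_or_ge n u.length with h | h
  · rw [happ n h.le, happ (n + 1) h]
    exact List.isChain_iff_getElem.1 hu n (by simp; omega)
  · obtain ⟨d, rfl⟩ := Nat.exists_eq_add_of_le h
    rw [Nat.add_assoc, prepend_length_add, prepend_length_add]
    exact hρ d

lemma IsRun.exists_extend_through_loop {ρ' : ℕ → S} (hρ' : IsRun L ρ') {v u : List S}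
    (hv : IsPath L v) (hu : IsLoop L u) {s : S} (hsu : s ∈ u) (hvs : v.getLast? = some s)
    (hρ'u : ρ' 0 ∈ u) (k : ℕ) :
    ∃ (ρ : ℕ → S) (N : ℕ), IsRun L ρ ∧ v.head? = some (ρ 0) ∧ v.length + k < N ∧
      (∀ j ≤ k, ρ (v.length + j) ∈ u) ∧ ∀ n, ρ (N + n) = ρ' n := by
  obtain ⟨w, hwlen, hwu, hchain⟩ := hu.exists_walk hsu hρ'u (k + 1)
  have hvpos : 0 < v.length := List.length_pos_iff.2 hv.1
  refine ⟨prepend (v ++ w) ρ', (v ++ w).length, isRun_prepend hρ' ?_, ?_, by simp; omega,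
    fun j hj => ?_, prepend_length_add _ _⟩
  · rw [List.append_assoc]
    refine hv.2.append hchain.tail fun x hx y hy => ?_
    obtain rfl : s = x := by simpa [hvs] using hx
    exact hchain.rel_head? hy
  · rw [prepend_of_lt _ (by simp; omega), List.getElem_append_left hvpos,
      List.head?_eq_getElem?, List.getElem?_eq_getElem hvpos]
  · rw [prepend_of_lt _ (by simp; omega), List.getElem_append_right (by omega)]
    exact hwu _ (by simp)

theorem exists_run_through_loops (k : ℕ) {tail : ℕ → S} (htail : IsRun L tail) :
    ∀ ps : List (List S × List S),
    (∀ p ∈ ps, IsPath L p.1 ∧ IsLoop L p.2 ∧ ∃ s ∈ p.2, p.1.getLast? = some s) →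
    ps.IsChain (fun p q => ∃ s ∈ p.2, q.1.head? = some s) →
    (∀ p ∈ ps.getLast?, tail 0 ∈ p.2) →
    ∃ (ρ : ℕ → S) (ws : List ℕ), IsRun L ρ ∧ (∀ p ∈ ps.head?, p.1.head? = some (ρ 0)) ∧
      (ps = [] → ρ 0 = tail 0) ∧ ws.length = ps.length ∧ ws.Pairwise (fun a b => a + k ≤ b) ∧
      ∀ i (hi : i < ws.length) (hi' : i < ps.length), ∀ j ≤ k, ρ (ws[i] + j) ∈ ps[i].2
  | [], _, _, _ => ⟨tail, [], htail, by simp, fun _ => rfl, rfl, .nil, by simp⟩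
  | (v, u) :: ps, hps, hchain, hlast => by
    obtain ⟨ρ', ws, hρ', hhead', hnil', hwslen, hspaced, hwin⟩ :=
      exists_run_through_loops k htail ps (fun p hp => hps p (List.mem_cons_of_mem _ hp))
        hchain.tail fun p hp => hlast p (by cases ps <;> simp_all)
    have hρ'u : ρ' 0 ∈ u := by
      cases ps with
      | nil => exact hnil' rfl ▸ hlast (v, u) rfl
      | cons q ps =>
        obtain ⟨s, hsu, hqs⟩ := (List.isChain_cons_cons.1 hchain).1
        rw [hhead' q rfl] at hqs
        exact Option.some.inj hqs ▸ hsu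
    obtain ⟨hv, hu, s, hsu, hvs⟩ : IsPath L v ∧ IsLoop L u ∧ ∃ s ∈ u, v.getLast? = some s :=
      hps (v, u) List.mem_cons_self
    obtain ⟨ρ, N, hρ, hhead, hN, hwin₀, hshift⟩ :=
      hρ'.exists_extend_through_loop hv hu hsu hvs hρ'u k
    refine ⟨ρ, v.length :: ws.map (· + N), hρ, by simpa using hhead, by simp, by simp [hwslen],
      List.pairwise_cons.2 ⟨?_, List.pairwise_map.2 (hspaced.imp fun h => by omega)⟩, ?_⟩
    · intro b hb
      obtain ⟨a, -, rfl⟩ := List.mem_map.1 hb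
      omega
    · rintro (_ | i) hi hi' j hj
      · exact hwin₀ j hj
      · have hi : i < ws.length := by simpa using hi
        simp only [List.getElem_cons_succ, List.getElem_map]
        rw [show ws[i] + N + j = N + (ws[i] + j) by omega, hshift]
        exact hwin i hi (by simpa using hi') j hj

end Runs

lemma IsRealWitness.exists_run {L : LTS S AP} {loops vs : List (List S)} {tail : ℕ → S}
    (h : IsRealWitness L loops vs tail) (hloops : ∀ u ∈ loops, IsLoop L u) (k : ℕ) :
    ∃ (ρ : ℕ → S) (ws : List ℕ), IsRun L ρ ∧ (0 < loops.length → ρ 0 = L.init) ∧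
      ws.length = loops.length ∧ ws.Pairwise (fun a b => a + k ≤ b) ∧
      ∀ i (hi : i < ws.length) (hi' : i < loops.length), ∀ j ≤ k, ρ (ws[i] + j) ∈ loops[i] := by
  obtain ⟨hlen, hpaths, htail, hinit, hnext, hend, hlast⟩ := h
  have hne : ∀ i (hi : i < vs.length), vs[i] ≠ [] := fun i hi => (hpaths _ (List.getElem_mem hi)).1
  have hpslen : (vs.zip loops).length = loops.length := by simp [hlen]
  have hpairs : ∀ p ∈ vs.zip loops,
      IsPath L p.1 ∧ IsLoop L p.2 ∧ ∃ s ∈ p.2, p.1.getLast? = some s := by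
    intro p hp
    obtain ⟨i, hi, rfl⟩ := List.mem_iff_getElem.1 hp
    rw [hpslen] at hi
    rw [List.getElem_zip]
    exact ⟨hpaths _ (List.getElem_mem _), hloops _ (List.getElem_mem _), _,
      hend i (by omega) hi _ (List.getLast?_eq_some_getLast (hne i (by omega))),
      List.getLast?_eq_some_getLast _⟩
  have hchain : (vs.zip loops).IsChain (fun p q => ∃ s ∈ p.2, q.1.head? = some s) := by
    refine List.isChain_iff_getElem.2 fun i hi => ?_
    rw [hpslen] at hi
    rw [List.getElem_zip, List.getElem_zip]
    exact ⟨_, hnext i (by omega) (by omega) _ (List.head?_eq_some_head (hne (i + 1) (by omega))),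
      List.head?_eq_some_head _⟩
  have htail0 : ∀ p ∈ (vs.zip loops).getLast?, tail 0 ∈ p.2 := by
    intro p hp
    obtain ⟨hne', rfl⟩ := List.mem_getLast?_eq_getLast hp
    have := hlast (hpslen ▸ List.length_pos_iff.2 hne')
    simpa [List.getLast_eq_getElem, hpslen] using this
  obtain ⟨ρ, ws, hρ, hhead, -, hwslen, hspaced, hwin⟩ :=
    exists_run_through_loops k htail (vs.zip loops) hpairs hchain htail0
  refine ⟨ρ, ws, hρ, fun hpos => ?_, by omega, hspaced, fun i hi hi' j hj => ?_⟩
  · have h0 := hhead _ (by rw [List.head?_eq_getElem?, List.getElem?_eq_getElem (by omega)]; rfl)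
    rw [List.getElem_zip] at h0
    have := hinit (by omega)
    rw [List.get_eq_getElem, h0] at this
    exact Option.some.inj this
  · have := hwin i hi (by omega) j hj
    rwa [List.getElem_zip] at this

theorem exists_not_satFinfC_of_realisable {L : LTS S AP} {ψ : CTree AP} (U : AvoidingSeq L ψ)
    (hU : Realisable L U) (k : ℕ) : ∃ ρ : ℕ → S, IsRun L ρ ∧ ρ 0 = L.init ∧ ¬ SatFinfC L ψ ρ k := by
  obtain ⟨vs, tail, hw⟩ := hU
  have hpos : 0 < U.labels.length := List.length_pos_iff.2 U.linext.ne_nil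
  obtain ⟨ρ, ws, hρ, hinit, hwslen, hspaced, hwin⟩ := hw.exists_run U.isLoop k
  have hwslab : ws.length = U.labels.length := by rw [hwslen, U.length_eq]
  refine ⟨ρ, hρ, hinit (by rw [U.length_eq]; exact hpos), fun hsat => ?_⟩
  set W := U.labels.zip ws
  have hWfst : W.map Prod.fst = U.labels := List.map_fst_zip (by omega)
  have hWsnd : W.map Prod.snd = ws := List.map_snd_zip (by omega)
  have hav : ∀ x ∈ W, ∀ j ≤ k, ¬ SatState L x.1 (ρ (x.2 + j)) := by
    intro x hx j hj
    obtain ⟨i, hi, rfl⟩ := List.mem_iff_getElem.1 hx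
    simp only [W, List.length_zip] at hi
    have hloop := List.getElem_mem (l := U.loops.zip U.labels) (n := i) (by simp; omega)
    rw [List.getElem_zip] at hloop ⊢
    exact U.avoid _ hloop _ (hwin i (by omega) (by omega) j hj)
  have hfail := not_satC_of_windows ψ W (hWfst ▸ U.linext)
    (List.pairwise_map.1 (hWsnd ▸ hspaced)) hav (U.labels[0], ws[0]) (by
      rw [List.head?_eq_getElem?, List.getElem?_eq_getElem (by simp [W]; omega), List.getElem_zip]
      rfl)
  obtain ⟨j, hj, hsj⟩ := hsat ws[0]
  exact hfail j hj hsj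

/-- **small witness property.** For `ψ` conjunction-free canonical and
`k ≥ |S| + 1`: there is an initialized run `ρ` of `L` with `(ρ,k) ⊭ F_p^∞ ψ` iff
there is a realisable `ψ`-avoiding sequence in `L`. -/
theorem small_witness [Fintype S] (L : LTS S AP) (ψ : CTree AP) (k : ℕ)
    (hk : Fintype.card S + 1 ≤ k) :
    (∃ ρ : ℕ → S, IsRun L ρ ∧ ρ 0 = L.init ∧ ¬ SatFinfC L ψ ρ k) ↔
    ∃ U : AvoidingSeq L ψ, Realisable L U := by
  constructor
  · rintro ⟨ρ, hρ, h0, h⟩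
    exact exists_realisable_of_not_satFinfC (by omega) hρ h0 h
  · rintro ⟨U, hU⟩
    exact exists_not_satFinfC_of_realisable U hU k
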